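/- Let ξ be a fuzzy interval with left component ξₗ non-decreasing right-continuous and right component ξᵣ non-increasing left-continuous, and let λ ∈ ℝ. Then the fuzzy sum of the crisp number δ_λ with ξ satisfies (λ⊕ξ)(x) = ξ(x−λ), where the sum is defined via generalized inverses: (λ⊕ξ)ₗ = (λ + (ξₗ)⁻¹_inf)⁻¹_sup and (λ⊕ξ)ᵣ = (λ + (ξᵣ)⁻¹_sup)⁻¹_inf. -/

import Mathlib

/-! By right continuity the infimum defining `(ξₗ)⁻¹_inf(α)` is attained, which gives the Galois
connection `(ξₗ)⁻¹_inf(α) ≤ y ↔ α ≤ ξₗ y` for `α ∈ (0, 1]`; re-inverting therefore returns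
`sup (0, ξₗ y] = ξₗ y`, and adding `λ` to the inverse shifts the re-inverted function by `λ`.
The right component becomes a left one after the reflection `x ↦ ξᵣ (-x)`. -/

open Set

noncomputable def ginvInf (f : ℝ → ℝ) (α : ℝ) : ℝ := sInf {x | α ≤ f x}

noncomputable def reinvSup (h : ℝ → ℝ) (x : ℝ) : ℝ := sSup {α ∈ Ioc (0:ℝ) 1 | h α ≤ x}

noncomputable def ginvSup (f : ℝ → ℝ) (α : ℝ) : ℝ := sSup {x | α ≤ f x}

noncomputable def reinvInf (h : ℝ → ℝ) (x : ℝ) : ℝ := sSup {α ∈ Ioc (0:ℝ) 1 | x ≤ h α}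

theorem le_apply_csInf_of_continuousWithinAt {α β : Type*} [ConditionallyCompleteLinearOrder α]
    [TopologicalSpace α] [OrderTopology α] [TopologicalSpace β] [Preorder β] [ClosedIciTopology β]
    {f : α → β} {A : Set α} {b : β} (hne : A.Nonempty) (hbdd : BddBelow A)
    (hf : ContinuousWithinAt f (Ici (sInf A)) (sInf A)) (hA : ∀ x ∈ A, b ≤ f x) :
    b ≤ f (sInf A) :=
  haveI : (nhdsWithin (sInf A) A).NeBot :=
    mem_closure_iff_nhdsWithin_neBot.1 ((isGLB_csInf hne hbdd).mem_closure hne)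
  ge_of_tendsto (hf.mono_left (nhdsWithin_mono _ fun _ hx => csInf_le hbdd hx))
    (Filter.eventually_of_mem self_mem_nhdsWithin hA)

theorem ginvInf_le_iff {f : ℝ → ℝ} (hmono : Monotone f)
    (hrc : ∀ x, ContinuousWithinAt f (Ici x) x) {α : ℝ} (hne : ∃ x, α ≤ f x)
    (hbdd : BddBelow {x | α ≤ f x}) (y : ℝ) : ginvInf f α ≤ y ↔ α ≤ f y :=
  ⟨fun h => (le_apply_csInf_of_continuousWithinAt hne hbdd (hrc _) fun _ hx => hx).trans
    (hmono h), fun h => csInf_le hbdd h⟩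

theorem sSup_sep_Ioc_zero_one_le {c : ℝ} (hc : c ∈ Icc (0 : ℝ) 1) :
    sSup {α ∈ Ioc (0 : ℝ) 1 | α ≤ c} = c := by
  have hset : {α ∈ Ioc (0 : ℝ) 1 | α ≤ c} = Ioc 0 c := by
    ext α
    simp only [mem_ofPred_eq, mem_Ioc]
    exact ⟨fun h => ⟨h.1.1, h.2⟩, fun h => ⟨⟨h.1, h.2.trans hc.2⟩, h.2⟩⟩
  rw [hset]
  rcases hc.1.eq_or_lt with rfl | hpos
  · rw [Ioc_self, Real.sSup_empty]
  · exact csSup_Ioc hpos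

theorem reinvSup_ginvInf {f : ℝ → ℝ} (hmono : Monotone f)
    (hrc : ∀ x, ContinuousWithinAt f (Ici x) x) (hmap : ∀ x, f x ∈ Icc (0 : ℝ) 1)
    (hsupp : ∃ l, ∀ x < l, f x = 0) (hone : ∃ m, f m = 1) (y : ℝ) :
    reinvSup (ginvInf f) y = f y := by
  obtain ⟨l, hl⟩ := hsupp
  obtain ⟨m, hm⟩ := hone
  have hiff : ∀ α ∈ Ioc (0 : ℝ) 1, ginvInf f α ≤ y ↔ α ≤ f y := by
    intro α hα
    refine ginvInf_le_iff hmono hrc ⟨m, hm ▸ hα.2⟩ ⟨l, fun x hx => ?_⟩ y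
    by_contra! hxl
    exact (hl x hxl ▸ hx : α ≤ 0).not_gt hα.1
  rw [reinvSup, sep_ext_iff.2 hiff, sSup_sep_Ioc_zero_one_le (hmap y)]

theorem ginvSup_eq_neg_ginvInf_comp_neg (f : ℝ → ℝ) (α : ℝ) :
    ginvSup f α = -ginvInf (fun x => f (-x)) α := by
  rw [ginvSup, ginvInf, ← Real.sSup_neg]
  congr 1
  ext x
  simp

theorem reinvInf_ginvSup {f : ℝ → ℝ} (hanti : Antitone f)
    (hlc : ∀ x, ContinuousWithinAt f (Iic x) x) (hmap : ∀ x, f x ∈ Icc (0 : ℝ) 1)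
    (hsupp : ∃ r, ∀ x, r < x → f x = 0) (hone : ∃ m, f m = 1) (y : ℝ) :
    reinvInf (ginvSup f) y = f y := by
  obtain ⟨r, hr⟩ := hsupp
  obtain ⟨m, hm⟩ := hone
  have hmono : Monotone fun x => f (-x) := fun _ _ hab => hanti (neg_le_neg hab)
  have hrc : ∀ x, ContinuousWithinAt (fun x => f (-x)) (Ici x) x := fun x =>
    (hlc (-x)).comp continuous_neg.continuousWithinAt fun _ hx => neg_le_neg (mem_Ici.1 hx)
  have hreflect := reinvSup_ginvInf hmono hrc (fun x => hmap (-x))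
    ⟨-r, fun x hx => hr (-x) (lt_neg_of_lt_neg hx)⟩ ⟨-m, by rw [neg_neg, hm]⟩ (-y)
  rw [neg_neg] at hreflect
  rw [← hreflect, reinvInf, reinvSup]
  simp only [ginvSup_eq_neg_ginvInf_comp_neg, le_neg]

theorem reinvSup_const_add (c : ℝ) (h : ℝ → ℝ) (x : ℝ) :
    reinvSup (fun α => c + h α) x = reinvSup h (x - c) := by
  simp only [reinvSup, le_sub_iff_add_le']

theorem reinvInf_const_add (c : ℝ) (h : ℝ → ℝ) (x : ℝ) :
    reinvInf (fun α => c + h α) x = reinvInf h (x - c) := by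
  simp only [reinvInf, sub_le_iff_le_add']

theorem scalar_addition_to_fuzzy_interval (ξl ξr : ℝ → ℝ) (lam : ℝ)
    (hξlmono : Monotone ξl)
    (hξlrc : ∀ x : ℝ, ContinuousWithinAt ξl (Ici x) x)
    (hξlmap : ∀ x, ξl x ∈ Icc (0:ℝ) 1)
    (hξlsupp : ∃ l : ℝ, ∀ x < l, ξl x = 0)
    (hξlone : ∃ m : ℝ, ξl m = 1)
    (hξranti : Antitone ξr)
    (hξrlc : ∀ x : ℝ, ContinuousWithinAt ξr (Iic x) x)
    (hξrmap : ∀ x, ξr x ∈ Icc (0:ℝ) 1)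
    (hξrsupp : ∃ r : ℝ, ∀ x, r < x → ξr x = 0)
    (hξrone : ∃ m : ℝ, ξr m = 1) :
    (∀ x : ℝ, reinvSup (fun α => lam + ginvInf ξl α) x = ξl (x - lam)) ∧
    (∀ x : ℝ, reinvInf (fun α => lam + ginvSup ξr α) x = ξr (x - lam)) :=
  ⟨fun x => by
    rw [reinvSup_const_add]
    exact reinvSup_ginvInf hξlmono hξlrc hξlmap hξlsupp hξlone (x - lam),
  fun x => by
    rw [reinvInf_const_add]
    exact reinvInf_ginvSup hξranti hξrlc hξrmap hξrsupp hξrone (x - lam)⟩
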